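/- arXiv:2403.10957 — 2 statements merged into one kernel-verified Lean document; each statement's English description precedes it below -/
import Mathlib

section
/- If G and H are finite simple graphs each having minimum degree at least 2 (every vertex of G has degree at least 2 in G and every vertex of H has degree at least 2 in H), then m(G×H, 2) ≤ |V(G×H)|/2, i.e., the direct product G×H has a 2-percolating set of size at most half its order. -/
/-!
Infect the full rows `V × {c.out}`, one for each connected component `c` of `H`. If row `w'` is
infected and `w ~ w'` in `H`, then `(v, w)` is adjacent to `(v', w')` for every `G`-neighbour `v'`
of `v`, so it has at least `deg_G v ≥ 2` infected neighbours; hence the infection spreads row by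
row along walks of `H` and reaches every vertex. Since `H` has no isolated vertices, every
component has at least two vertices, so at most half of the rows were infected initially.
-/

open SimpleGraph

/-- The direct (tensor/categorical) product of two simple graphs. -/
def directProd {V W : Type*} (G : SimpleGraph V) (H : SimpleGraph W) :
    SimpleGraph (V × W) where
  Adj p q := G.Adj p.1 q.1 ∧ H.Adj p.2 q.2
  symm := ⟨fun _ _ h => ⟨h.1.symm, h.2.symm⟩⟩
  loopless := ⟨fun p h => G.loopless.irrefl p.1 h.1⟩

/-- One step of the `r`-neighbor bootstrap percolation process: a vertex becomes
infected once it has at least `r` infected neighbors. -/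
def percStep {V : Type*} (G : SimpleGraph V) (r : ℕ) (A : Set V) : Set V :=
  A ∪ {v | r ≤ {u | G.Adj v u ∧ u ∈ A}.ncard}

/-- `A` is an `r`-percolating set: iterating the update rule eventually infects
every vertex of the graph. -/
def Percolates {V : Type*} (G : SimpleGraph V) (r : ℕ) (A : Set V) : Prop :=
  ∃ t : ℕ, (percStep G r)^[t] A = Set.univ

/-- `percNum G r` is `m(G,r)`, the minimum cardinality of an `r`-percolating set. -/
noncomputable def percNum {V : Type*} (G : SimpleGraph V) (r : ℕ) : ℕ :=
  sInf {n | ∃ A : Set V, Percolates G r A ∧ A.ncard = n}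

theorem SimpleGraph.ConnectedComponent.out_injective {V : Type*} {G : SimpleGraph V} :
    Function.Injective (Quot.out : G.ConnectedComponent → V) :=
  Function.LeftInverse.injective Quot.out_eq

section Percolation

variable {V : Type*} {G : SimpleGraph V} {r : ℕ} {A : Set V}

theorem subset_percStep : A ⊆ percStep G r A :=
  Set.subset_union_left

theorem monotone_iterate_percStep : Monotone fun t => (percStep G r)^[t] A :=
  monotone_nat_of_le_succ fun t => by
    simpa only [Function.iterate_succ_apply'] using subset_percStep

theorem percolates_of_forall_exists_mem_iterate [Finite V]
    (h : ∀ v, ∃ t, v ∈ (percStep G r)^[t] A) : Percolates G r A := by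
  cases nonempty_fintype V
  choose t ht using h
  exact ⟨Finset.univ.sup t, Set.eq_univ_of_forall fun v =>
    monotone_iterate_percStep (Finset.le_sup (Finset.mem_univ v)) (ht v)⟩

theorem percNum_le_ncard (h : Percolates G r A) : percNum G r ≤ A.ncard :=
  Nat.sInf_le ⟨A, h, rfl⟩

end Percolation

section DirectProduct

variable {V W : Type*} [Finite V] [Finite W] {G : SimpleGraph V} {H : SimpleGraph W}
  [G.LocallyFinite] {r : ℕ}

/-- A vertex `(v, w)` sees the whole `G`-neighbourhood of `v` in any row `w'` adjacent to `w`. -/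
theorem mem_percStep_directProd {S : Set (V × W)} {v : V} {w w' : W} (hv : r ≤ G.degree v)
    (hw : H.Adj w w') (hrow : ∀ v', (v', w') ∈ S) : (v, w) ∈ percStep (directProd G H) r S := by
  refine Or.inr ?_
  have hsub : (fun x => (x, w')) '' G.neighborSet v ⊆
      {u | (directProd G H).Adj (v, w) u ∧ u ∈ S} := by
    rintro _ ⟨x, hx, rfl⟩
    exact ⟨⟨hx, hw⟩, hrow x⟩
  calc r ≤ G.degree v := hv
    _ = (G.neighborSet v).ncard := by
      rw [← card_neighborSet_eq_degree, ← Nat.card_eq_fintype_card, Nat.card_coe_set_eq]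
    _ = ((fun x => (x, w')) '' G.neighborSet v).ncard :=
      (Set.ncard_image_of_injective _ fun _ _ h => congrArg Prod.fst h).symm
    _ ≤ _ := Set.ncard_le_ncard hsub

theorem exists_row_mem_iterate_percStep_of_reachable (hG : ∀ v, r ≤ G.degree v)
    {S : Set (V × W)} {w' w : W} (hreach : H.Reachable w' w) (hrow : ∀ v, (v, w') ∈ S) :
    ∃ t, ∀ v, (v, w) ∈ (percStep (directProd G H) r)^[t] S := by
  obtain ⟨p⟩ := hreach
  induction p generalizing S with
  | nil => exact ⟨0, hrow⟩
  | cons hadj _ ih =>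
    obtain ⟨t, ht⟩ := ih fun v => mem_percStep_directProd (hG v) hadj.symm hrow
    exact ⟨t + 1, by simpa only [Function.iterate_succ_apply] using ht⟩

/-- Infecting one full row in each component of `H` suffices. -/
theorem percNum_directProd_le (hG : ∀ v, r ≤ G.degree v) :
    percNum (directProd G H) r ≤ Nat.card V * Nat.card H.ConnectedComponent := by
  let A : Set (V × W) := Set.univ ×ˢ Set.range (Quot.out : H.ConnectedComponent → W)
  have hperc : Percolates (directProd G H) r A := by
    refine percolates_of_forall_exists_mem_iterate ?_
    rintro ⟨v, w⟩
    have hreach : H.Reachable (H.connectedComponentMk w).out w :=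
      ConnectedComponent.exact (Quot.out_eq _)
    obtain ⟨t, ht⟩ := exists_row_mem_iterate_percStep_of_reachable (S := A) hG hreach
      fun v => ⟨Set.mem_univ v, _, rfl⟩
    exact ⟨t, ht v⟩
  calc percNum (directProd G H) r ≤ A.ncard := percNum_le_ncard hperc
    _ = Nat.card V * Nat.card H.ConnectedComponent := by
      rw [Set.ncard_prod, Set.ncard_univ,
        Set.ncard_range_of_injective ConnectedComponent.out_injective]
      rfl

end DirectProduct

/-- Each component contains a vertex `c.out` and a neighbour of it, and these `2 * #components`
vertices are distinct. -/
theorem two_mul_card_connectedComponent_le {W : Type*} [Finite W] {H : SimpleGraph W}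
    (h : ∀ w, ∃ w', H.Adj w w') : 2 * Nat.card H.ConnectedComponent ≤ Nat.card W := by
  choose nb hnb using h
  have hmk : ∀ c : H.ConnectedComponent, H.connectedComponentMk (nb c.out) = c := fun c =>
    (ConnectedComponent.sound (hnb c.out).symm.reachable).trans (Quot.out_eq c)
  let out : H.ConnectedComponent → W := Quot.out
  have hinj : Function.Injective (Sum.elim out (nb ∘ out)) := by
    refine ConnectedComponent.out_injective.sumElim
      (fun c d h => (hmk c).symm.trans ((congrArg _ h).trans (hmk d))) fun c d h => ?_
    have hcd : c = d := (Quot.out_eq c).symm.trans ((congrArg _ h).trans (hmk d))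
    subst hcd
    exact (hnb c.out).ne h
  have := Nat.card_le_card_of_injective _ hinj
  rwa [Nat.card_sum, ← two_mul] at this

theorem stmt_2 {V W : Type*} [Fintype V] [Fintype W]
    (G : SimpleGraph V) (H : SimpleGraph W)
    [DecidableRel G.Adj] [DecidableRel H.Adj]
    (hG : ∀ v : V, 2 ≤ G.degree v) (hH : ∀ w : W, 2 ≤ H.degree w) :
    2 * percNum (directProd G H) 2 ≤ Fintype.card (V × W) := by
  have hcomp := two_mul_card_connectedComponent_le fun w =>
    (H.degree_pos_iff_exists_adj w).mp (by linarith [hH w])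
  calc 2 * percNum (directProd G H) 2
      ≤ 2 * (Nat.card V * Nat.card H.ConnectedComponent) := by
        gcongr; exact percNum_directProd_le hG
    _ = Nat.card V * (2 * Nat.card H.ConnectedComponent) := by ring
    _ ≤ Nat.card V * Nat.card W := by gcongr
    _ = Fintype.card (V × W) := by simp only [Nat.card_eq_fintype_card, Fintype.card_prod]
end

section
/- For every integer n ≥ 2, the n-dimensional hypercube graph Q_n satisfies m(Q_n, n) = 2^{n−1}, i.e., the minimum size of an n-percolating set of Q_n equals half its order. -/
open SimpleGraph

/-- The n-dimensional hypercube graph: vertices are functions Fin n → Bool,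
adjacent iff they differ in exactly one coordinate. -/
def hypercubeGraph (n : ℕ) : SimpleGraph (Fin n → Bool) where
  Adj x y := ∃! i, x i ≠ y i
  symm := by
    constructor
    rintro x y ⟨i, hi, hu⟩
    exact ⟨i, hi.symm, fun j hj => hu j hj.symm⟩
  loopless := by
    constructor
    rintro x ⟨i, hi, -⟩
    exact hi rfl

/-!
In an `r`-regular graph a set `A` is `r`-percolating exactly when its complement is independent:
two adjacent uninfected vertices each see at most `r - 1` infected neighbours, so they stay
uninfected forever, while a vertex outside `A` whose neighbours all lie in `A` is infected at once.
As `Q_n` is `n`-regular, `m(Q_n, n)` is the least size of a set with independent complement.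
Flipping one coordinate injects such a complement into the set, so it has at least `2^(n-1)`
elements, and the vertices of even weight attain this bound.
-/

open Function Set

section Bootstrap

variable {V : Type*} {G : SimpleGraph V} {r : ℕ}

lemma ncard_neighborSet_eq_degree [G.LocallyFinite] (v : V) :
    (G.neighborSet v).ncard = G.degree v := by
  rw [← Nat.card_coe_set_eq, Nat.card_eq_fintype_card, card_neighborSet_eq_degree]

lemma notMem_percStep_of_adj [G.LocallyFinite] {B : Set V} {v w : V} (hv : G.degree v ≤ r)
    (hvw : G.Adj v w) (hvB : v ∉ B) (hwB : w ∉ B) : v ∉ percStep G r B := by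
  rintro (hmem | hmem)
  · exact hvB hmem
  · have hlt : (G.neighborSet v ∩ B).ncard < (G.neighborSet v).ncard :=
      ncard_lt_ncard ⟨inter_subset_left, fun h => hwB (h hvw).2⟩ (G.neighborSet v).toFinite
    rw [ncard_neighborSet_eq_degree] at hlt
    exact absurd (hmem.trans_lt hlt) hv.not_gt

lemma Percolates.isIndepSet_compl [G.LocallyFinite] (hdeg : ∀ v, G.degree v ≤ r) {A : Set V}
    (hA : Percolates G r A) : G.IsIndepSet Aᶜ := by
  intro v hv w hw _ hvw
  obtain ⟨t, ht⟩ := hA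
  have hstay : ∀ s, v ∉ (percStep G r)^[s] A ∧ w ∉ (percStep G r)^[s] A := by
    intro s
    induction s with
    | zero => exact ⟨hv, hw⟩
    | succ s ih =>
      rw [iterate_succ_apply']
      exact ⟨notMem_percStep_of_adj (hdeg v) hvw ih.1 ih.2,
        notMem_percStep_of_adj (hdeg w) hvw.symm ih.2 ih.1⟩
  exact (hstay t).1 (ht ▸ mem_univ v)

lemma percolates_of_isIndepSet_compl [G.LocallyFinite] (hdeg : ∀ v, r ≤ G.degree v)
    {A : Set V} (hA : G.IsIndepSet Aᶜ) : Percolates G r A := by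
  refine ⟨1, eq_univ_of_forall fun v => ?_⟩
  by_cases hv : v ∈ A
  · exact Or.inl hv
  · refine Or.inr ?_
    have hN : G.neighborSet v ∩ A = G.neighborSet v :=
      inter_eq_left.2 fun w hvw => by_contra fun hw => hA hv hw (G.ne_of_adj hvw) hvw
    show r ≤ (G.neighborSet v ∩ A).ncard
    rw [hN, ncard_neighborSet_eq_degree]
    exact hdeg v

theorem percolates_iff_isIndepSet_compl [G.LocallyFinite] (hG : G.IsRegularOfDegree r)
    {A : Set V} : Percolates G r A ↔ G.IsIndepSet Aᶜ :=
  ⟨Percolates.isIndepSet_compl fun v => (hG v).le,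
    percolates_of_isIndepSet_compl fun v => (hG v).ge⟩

namespace SimpleGraph

lemma IsIndepSet.card_le_two_mul_ncard_compl [Finite V] {f : V → V} (hf : Injective f)
    (hadj : ∀ v, G.Adj v (f v)) {S : Set V} (hS : G.IsIndepSet S) :
    Nat.card V ≤ 2 * Sᶜ.ncard := by
  have hmaps : MapsTo f S Sᶜ := fun v hv hfv => hS hv hfv (G.ne_of_adj (hadj v)) (hadj v)
  have := ncard_le_ncard_of_injOn f hmaps hf.injOn
  have := ncard_add_ncard_compl S
  omega

end SimpleGraph

end Bootstrap

section Hypercube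

variable {n : ℕ}

def flipCoord (i : Fin n) (x : Fin n → Bool) : Fin n → Bool := update x i (!x i)

lemma flipCoord_self (i : Fin n) (x : Fin n → Bool) : flipCoord i x i = !x i :=
  update_self i _ x

lemma flipCoord_of_ne {i j : Fin n} (h : j ≠ i) (x : Fin n → Bool) : flipCoord i x j = x j :=
  update_of_ne h _ x

lemma flipCoord_involutive (i : Fin n) : Involutive (flipCoord i) := fun x => by
  funext j
  rcases eq_or_ne j i with rfl | h
  · simp [flipCoord_self]
  · simp [flipCoord_of_ne h]

lemma injective_flipCoord_apply (x : Fin n → Bool) : Injective fun i => flipCoord i x := by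
  intro i j hij
  by_contra hne
  have := congrFun hij i
  simp [flipCoord_self, flipCoord_of_ne hne] at this

lemma hypercubeGraph_adj_iff {x y : Fin n → Bool} :
    (hypercubeGraph n).Adj x y ↔ ∃ i, flipCoord i x = y := by
  constructor
  · rintro ⟨i, hi, hunique⟩
    refine ⟨i, funext fun j => ?_⟩
    rcases eq_or_ne j i with rfl | h
    · rw [flipCoord_self, Bool.eq_not_of_ne (Ne.symm hi)]
    · rw [flipCoord_of_ne h]
      exact not_not.1 (mt (hunique j) h)
  · rintro ⟨i, rfl⟩
    refine ⟨i, by simp [flipCoord_self], fun j hj => by_contra fun h => hj ?_⟩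
    rw [flipCoord_of_ne h]

instance : DecidableRel (hypercubeGraph n).Adj :=
  fun _ _ => decidable_of_iff _ hypercubeGraph_adj_iff.symm

lemma natCard_hypercube_vertices (hn : 0 < n) : Nat.card (Fin n → Bool) = 2 * 2 ^ (n - 1) := by
  rw [Nat.card_fun, Nat.card_eq_fintype_card, Fintype.card_bool, Nat.card_eq_fintype_card,
    Fintype.card_fin, ← pow_succ', Nat.sub_add_cancel hn]

lemma hypercubeGraph_isRegularOfDegree : (hypercubeGraph n).IsRegularOfDegree n := by
  intro x
  have hN : (hypercubeGraph n).neighborSet x = range fun i => flipCoord i x := by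
    ext y; simp [hypercubeGraph_adj_iff]
  rw [← ncard_neighborSet_eq_degree, hN, ncard_range_of_injective (injective_flipCoord_apply x),
    Nat.card_eq_fintype_card, Fintype.card_fin]

lemma two_pow_pred_le_ncard_of_isIndepSet_compl (hn : 0 < n) {A : Set (Fin n → Bool)}
    (hA : (hypercubeGraph n).IsIndepSet Aᶜ) : 2 ^ (n - 1) ≤ A.ncard := by
  have hflip := hA.card_le_two_mul_ncard_compl (flipCoord_involutive ⟨0, hn⟩).injective
    fun x => hypercubeGraph_adj_iff.2 ⟨_, rfl⟩
  rw [compl_compl, natCard_hypercube_vertices hn] at hflip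
  omega

def parity (x : Fin n → Bool) : ZMod 2 := ∑ i, ((x i).toNat : ZMod 2)

lemma parity_flipCoord (i : Fin n) (x : Fin n → Bool) :
    parity (flipCoord i x) = parity x + 1 := by
  have hnot : ∀ b : Bool, (((!b).toNat : ℕ) : ZMod 2) = b.toNat + 1 := by decide
  unfold parity
  rw [← Finset.add_sum_erase _ _ (Finset.mem_univ i),
    ← Finset.add_sum_erase _ _ (Finset.mem_univ i), flipCoord_self, hnot,
    Finset.sum_congr rfl fun j hj => by rw [flipCoord_of_ne (Finset.ne_of_mem_erase hj)]]
  ring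

def evenVertices (n : ℕ) : Set (Fin n → Bool) := {x | parity x = 0}

lemma isIndepSet_evenVertices : (hypercubeGraph n).IsIndepSet (evenVertices n) := by
  rintro x (hx : parity x = 0) _ (hy : parity _ = 0) - hxy
  obtain ⟨i, rfl⟩ := hypercubeGraph_adj_iff.1 hxy
  rw [parity_flipCoord, hx, zero_add] at hy
  exact one_ne_zero hy

lemma isIndepSet_compl_evenVertices : (hypercubeGraph n).IsIndepSet (evenVertices n)ᶜ := by
  rintro x (hx : parity x ≠ 0) _ (hy : parity _ ≠ 0) - hxy
  obtain ⟨i, rfl⟩ := hypercubeGraph_adj_iff.1 hxy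
  rw [parity_flipCoord] at hy
  have hZMod2 : ∀ a : ZMod 2, a ≠ 0 → a + 1 = 0 := by decide
  exact hy (hZMod2 _ hx)

lemma ncard_evenVertices (hn : 0 < n) : (evenVertices n).ncard = 2 ^ (n - 1) := by
  have hodd := two_pow_pred_le_ncard_of_isIndepSet_compl hn
    (compl_compl (evenVertices n) ▸ isIndepSet_evenVertices)
  have heven := two_pow_pred_le_ncard_of_isIndepSet_compl hn isIndepSet_compl_evenVertices
  have hsum := ncard_add_ncard_compl (evenVertices n)
  rw [natCard_hypercube_vertices hn] at hsum
  omega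

end Hypercube

theorem stmt_18 (n : ℕ) (hn : 2 ≤ n) :
    percNum (hypercubeGraph n) n = 2 ^ (n - 1) := by
  have hpos : 0 < n := by omega
  have hperc : ∀ A, Percolates (hypercubeGraph n) n A ↔ (hypercubeGraph n).IsIndepSet Aᶜ :=
    fun _ => percolates_iff_isIndepSet_compl hypercubeGraph_isRegularOfDegree
  have hEven : Percolates (hypercubeGraph n) n (evenVertices n) :=
    (hperc _).2 isIndepSet_compl_evenVertices
  refine le_antisymm (Nat.sInf_le ⟨_, hEven, ncard_evenVertices hpos⟩) ?_
  refine le_csInf ⟨_, _, hEven, rfl⟩ ?_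
  rintro _ ⟨A, hA, rfl⟩
  exact two_pow_pred_le_ncard_of_isIndepSet_compl hpos ((hperc A).1 hA)
end
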